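/- arXiv:1711.05983 — 2 statements merged into one kernel-verified Lean document; each statement's English description precedes it below -/
import Mathlib

section
/- The binomial Eulerian polynomial \tilde{A}_n(x) is symmetric with center n/2: x^n \tilde{A}_n(1/x) = \tilde{A}_n(x). -/
/-!
Write `T_a f (n) = ∑ₖ C(n,k) a^(n-k) f(k)` for the binomial transform; then `T_a ∘ T_b = T_(a+b)`.
Inserting the largest letter into a permutation gives the recurrence
`A_(n+1) = (1 + n x) A_n + x (1 - x) A_n'`, from which `T_(x-1) A (n) = x A_n` for `n ≥ 1`.
Hence `Ã_n = T_1 (T_(x-1) A) (n) = T_x A (n) = ∑ₖ C(n,k) x^(n-k) A_k`.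
Reversing the values of a permutation turns descents into ascents, so `A_k` is palindromic of
degree `k - 1`; reflecting the defining expression `1 + x ∑ₖ C(n,k) A_k` in degree `n` therefore
produces the second expression `∑ₖ C(n,k) x^(n-k) A_k` term by term.
-/

open Polynomial Finset

/-- The value `w(i)` of a permutation of `{0,…,n-1}` at position `i` (0-based),
padded by `n` outside the range. -/
def permVal {n : ℕ} (w : Equiv.Perm (Fin n)) (i : ℕ) : ℕ :=
  if h : i < n then (w ⟨i, h⟩ : ℕ) else n

/-- The number of descents of a permutation. -/
def des {n : ℕ} (w : Equiv.Perm (Fin n)) : ℕ :=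
  ((Finset.range (n - 1)).filter fun i => permVal w (i + 1) < permVal w i).card

/-- The Eulerian polynomial `A_n(x) = ∑_{w ∈ S_n} x^{des(w)}`. -/
noncomputable def eulerian (n : ℕ) : Polynomial ℝ :=
  ∑ w : Equiv.Perm (Fin n), Polynomial.X ^ des w

/-- The binomial Eulerian polynomial `Ã_n(x) = 1 + x ∑_{k=1}^n C(n,k) A_k(x)`. -/
noncomputable def binEulerian (n : ℕ) : Polynomial ℝ :=
  1 + Polynomial.X * ∑ k ∈ Finset.Icc 1 n, Polynomial.C ((n.choose k : ℝ)) * eulerian k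

section BinomialTransform

variable {R : Type*} [CommSemiring R]

def binomialTransform (a : R) (f : ℕ → R) (n : ℕ) : R :=
  ∑ k ∈ range (n + 1), (n.choose k : R) * (a ^ (n - k) * f k)

@[simp]
lemma binomialTransform_zero (a : R) (f : ℕ → R) : binomialTransform a f 0 = f 0 := by
  simp [binomialTransform]

lemma binomialTransform_one_left (f : ℕ → R) (n : ℕ) :
    binomialTransform 1 f n = ∑ k ∈ range (n + 1), (n.choose k : R) * f k := by
  simp [binomialTransform]

lemma binomialTransform_succ (a : R) (f : ℕ → R) (n : ℕ) :
    binomialTransform a f (n + 1) =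
      a * binomialTransform a f n + binomialTransform a (fun k => f (k + 1)) n := by
  rw [binomialTransform, sum_choose_succ_mul (fun k j => a ^ j * f k), binomialTransform,
    binomialTransform, mul_sum]
  congr 1
  refine sum_congr rfl fun k hk => ?_
  rw [Nat.sub_add_comm (mem_range_succ_iff.mp hk), pow_succ]
  ring

lemma binomialTransform_mul_add (a b : R) (f g : ℕ → R) (n : ℕ) :
    binomialTransform a (fun k => b * f k + g k) n =
      b * binomialTransform a f n + binomialTransform a g n := by
  simp only [binomialTransform, mul_sum, ← sum_add_distrib]
  exact sum_congr rfl fun k _ => by ring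

theorem binomialTransform_binomialTransform (a b : R) (f : ℕ → R) (n : ℕ) :
    binomialTransform a (binomialTransform b f) n = binomialTransform (a + b) f n := by
  induction n generalizing f with
  | zero => simp
  | succ n ih =>
    have hshift : (fun k => binomialTransform b f (k + 1)) =
        fun k => b * binomialTransform b f k + binomialTransform b (fun k => f (k + 1)) k :=
      funext fun k => binomialTransform_succ b f k
    rw [binomialTransform_succ, hshift, binomialTransform_mul_add, ih, ih,
      binomialTransform_succ]
    ring

end BinomialTransform

lemma mul_derivative_pow {R : Type*} [CommSemiring R] (p : R[X]) (m : ℕ) :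
    p * derivative (p ^ m) = m * p ^ m * derivative p := by
  cases m with
  | zero => simp
  | succ m =>
    rw [derivative_pow, C_eq_natCast, Nat.add_sub_cancel, pow_succ]
    ring

lemma reflect_sum {R ι : Type*} [Semiring R] (N : ℕ) (s : Finset ι) (f : ι → R[X]) :
    reflect N (∑ i ∈ s, f i) = ∑ i ∈ s, reflect N (f i) :=
  map_sum (⟨⟨reflect N, reflect_zero⟩, fun p q => reflect_add p q N⟩ : R[X] →+ R[X]) f s

def descCount : List ℕ → ℕ
  | a :: b :: t => (if b < a then 1 else 0) + descCount (b :: t)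
  | _ => 0

@[simp]
lemma descCount_nil : descCount [] = 0 := rfl

@[simp]
lemma descCount_singleton (a : ℕ) : descCount [a] = 0 := rfl

lemma descCount_cons_cons (a b : ℕ) (t : List ℕ) :
    descCount (a :: b :: t) = (if b < a then 1 else 0) + descCount (b :: t) := rfl

lemma descCount_cons_le (a : ℕ) (t : List ℕ) : descCount (a :: t) ≤ t.length := by
  induction t generalizing a with
  | nil => simp
  | cons b t ih =>
    rw [descCount_cons_cons, List.length_cons]
    have := ih b
    split <;> omega

lemma descCount_eq_card_filter (l : List ℕ) :
    descCount l = #{i ∈ range (l.length - 1) | l.getD (i + 1) 0 < l.getD i 0} := by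
  match l with
  | [] => simp
  | [a] => simp
  | a :: b :: t =>
    rw [descCount_cons_cons, descCount_eq_card_filter (b :: t), card_filter, card_filter,
      show (a :: b :: t).length - 1 = (b :: t).length - 1 + 1 by simp, sum_range_succ']
    simp only [List.getD_cons_succ, List.getD_cons_zero]
    omega

section InsertIdx

variable {R : Type*} [CommSemiring R] (x : R) (n : ℕ)

lemma sum_pow_descCount_cons_insertIdx (a : ℕ) (t : List ℕ) (h : ∀ y ∈ a :: t, y < n) :
    ∑ p ∈ range (t.length + 1), x ^ descCount (a :: t.insertIdx p n) =
      (descCount (a :: t) + 1) * x ^ descCount (a :: t) +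
        ((t.length - descCount (a :: t) : ℕ) : R) * x ^ (descCount (a :: t) + 1) := by
  induction t generalizing a with
  | nil => simp [descCount_cons_cons, (h a (by simp)).not_gt]
  | cons b t ih =>
    have hba : descCount (n :: b :: t) = 1 + descCount (b :: t) := by
      rw [descCount_cons_cons, if_pos (h b (by simp))]
    have hle := descCount_cons_le b t
    rw [List.length_cons, sum_range_succ']
    simp only [List.insertIdx_succ_cons, List.insertIdx_zero, descCount_cons_cons a b, pow_add,
      ← mul_sum, ih b fun y hy => h y (List.mem_cons_of_mem a hy),
      descCount_cons_cons a n, if_neg (h a (by simp)).not_gt, zero_add, hba]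
    split_ifs
    · rw [show t.length + 1 - (1 + descCount (b :: t)) = t.length - descCount (b :: t) by omega]
      push_cast
      ring
    · rw [show t.length + 1 - (0 + descCount (b :: t)) = t.length - descCount (b :: t) + 1 by omega]
      push_cast
      ring

lemma sum_pow_descCount_insertIdx (l : List ℕ) (h : ∀ y ∈ l, y < n) :
    ∑ p ∈ range (l.length + 1), x ^ descCount (l.insertIdx p n) =
      (descCount l + 1) * x ^ descCount l +
        ((l.length - descCount l : ℕ) : R) * x ^ (descCount l + 1) := by
  cases l with
  | nil => simp
  | cons a t =>
    rw [List.length_cons, sum_range_succ', List.insertIdx_zero]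
    simp only [List.insertIdx_succ_cons, sum_pow_descCount_cons_insertIdx x n a t h]
    rw [descCount_cons_cons, if_pos (h a (by simp)),
      Nat.sub_add_comm (descCount_cons_le a t)]
    push_cast
    ring

end InsertIdx

def permList {n : ℕ} (w : Equiv.Perm (Fin n)) : List ℕ := List.ofFn fun i => (w i : ℕ)

@[simp]
lemma length_permList {n : ℕ} (w : Equiv.Perm (Fin n)) : (permList w).length = n := by
  simp [permList]

lemma lt_of_mem_permList {n : ℕ} (w : Equiv.Perm (Fin n)) : ∀ y ∈ permList w, y < n := by
  simp [permList, List.mem_ofFn]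

lemma des_eq_descCount_permList {n : ℕ} (w : Equiv.Perm (Fin n)) :
    des w = descCount (permList w) := by
  have hget : ∀ j < n, (permList w).getD j 0 = permVal w j := fun j hj => by
    simp [permList, permVal, hj]
  rw [descCount_eq_card_filter, length_permList, des]
  refine congrArg card (filter_congr fun i hi => ?_)
  rw [mem_range] at hi
  rw [hget i (by omega), hget (i + 1) (by omega)]

/-- In one-line notation: `w` with the new largest value `n` inserted at position `p`. -/
def insertMax {n : ℕ} (p : Fin (n + 1)) (w : Equiv.Perm (Fin n)) : Equiv.Perm (Fin (n + 1)) :=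
  (finSuccEquiv' p).trans (w.optionCongr.trans (finSuccEquiv' (Fin.last n)).symm)

@[simp]
lemma insertMax_apply_self {n : ℕ} (p : Fin (n + 1)) (w : Equiv.Perm (Fin n)) :
    insertMax p w p = Fin.last n := by
  simp [insertMax]

@[simp]
lemma insertMax_apply_succAbove {n : ℕ} (p : Fin (n + 1)) (w : Equiv.Perm (Fin n)) (j : Fin n) :
    insertMax p w (p.succAbove j) = (w j).castSucc := by
  simp [insertMax, Fin.succAbove_last]

lemma insertMax_injective {n : ℕ} :
    Function.Injective fun pw : Fin (n + 1) × Equiv.Perm (Fin n) => insertMax pw.1 pw.2 := by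
  rintro ⟨p, w⟩ ⟨p', w'⟩ h
  simp only at h
  obtain rfl : p = p' := by
    by_contra hne
    obtain ⟨j, hj⟩ := Fin.exists_succAbove_eq hne
    have := insertMax_apply_succAbove p' w' j
    rw [hj, ← h, insertMax_apply_self] at this
    exact (Fin.castSucc_lt_last (w' j)).ne this.symm
  suffices w = w' by rw [this]
  ext j
  have := congrArg (fun σ : Equiv.Perm (Fin (n + 1)) => σ (p.succAbove j)) h
  exact congrArg Fin.val (by simpa using this)

lemma insertMax_bijective {n : ℕ} :
    Function.Bijective fun pw : Fin (n + 1) × Equiv.Perm (Fin n) => insertMax pw.1 pw.2 := by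
  rw [Fintype.bijective_iff_injective_and_card]
  exact ⟨insertMax_injective, by simp [Fintype.card_perm, Nat.factorial_succ]⟩

lemma permList_insertMax {n : ℕ} (p : Fin (n + 1)) (w : Equiv.Perm (Fin n)) :
    permList (insertMax p w) = (permList w).insertIdx p n := by
  unfold permList
  refine List.ext_getElem (by simp [List.length_insertIdx, p.is_le]) fun j hj _ => ?_
  rw [List.getElem_insertIdx, List.getElem_ofFn]
  rw [List.length_ofFn] at hj
  by_cases hjp : j = p
  · simp [hjp]
  obtain ⟨k, hk⟩ := Fin.exists_succAbove_eq (x := ⟨j, hj⟩) (y := p) (by simp [Fin.ext_iff, hjp])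
  rw [← hk, insertMax_apply_succAbove]
  by_cases hkp : k.castSucc < p
  · rw [Fin.succAbove_of_castSucc_lt _ _ hkp, Fin.ext_iff, Fin.val_castSucc] at hk
    have hlt : (k : ℕ) < p := hkp
    subst hk
    simp [hlt]
  · rw [Fin.succAbove_of_le_castSucc _ _ (not_lt.mp hkp), Fin.ext_iff, Fin.val_succ] at hk
    rw [Fin.lt_def, Fin.val_castSucc] at hkp
    have hgt : ¬ (k : ℕ) + 1 < p := by omega
    subst hk
    simp [hjp, hgt]

lemma des_le {n : ℕ} (w : Equiv.Perm (Fin n)) : des w ≤ n - 1 :=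
  (card_filter_le _ _).trans (card_range _).le

lemma eulerian_zero : eulerian 0 = 1 := by
  simp [eulerian, des]

lemma eulerian_one : eulerian 1 = 1 := by
  simp [eulerian, des]

lemma sum_pow_des_insertMax {n : ℕ} (w : Equiv.Perm (Fin n)) :
    ∑ p : Fin (n + 1), (X : ℝ[X]) ^ des (insertMax p w) =
      ((des w : ℝ[X]) + 1) * X ^ des w + ((n - des w : ℕ) : ℝ[X]) * X ^ (des w + 1) := by
  have h := sum_pow_descCount_insertIdx (X : ℝ[X]) n (permList w) (lt_of_mem_permList w)
  rw [length_permList] at h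
  simp only [des_eq_descCount_permList, permList_insertMax]
  rw [Fin.sum_univ_eq_sum_range (fun p => X ^ descCount ((permList w).insertIdx p n)), h]

theorem eulerian_succ (n : ℕ) :
    eulerian (n + 1) =
      (1 + (n : ℝ[X]) * X) * eulerian n + X * (1 - X) * derivative (eulerian n) := by
  calc eulerian (n + 1)
      = ∑ pw : Fin (n + 1) × Equiv.Perm (Fin n), X ^ des (insertMax pw.1 pw.2) :=
        (Fintype.sum_bijective _ insertMax_bijective _ _ fun _ => rfl).symm
    _ = ∑ w : Equiv.Perm (Fin n),
          (((des w : ℝ[X]) + 1) * X ^ des w + ((n - des w : ℕ) : ℝ[X]) * X ^ (des w + 1)) := by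
        rw [Fintype.sum_prod_type, sum_comm]
        simp only [sum_pow_des_insertMax]
    _ = _ := by
        rw [eulerian, derivative_sum, mul_sum, mul_sum, ← sum_add_distrib]
        refine sum_congr rfl fun w _ => ?_
        have h := mul_derivative_pow (X : ℝ[X]) (des w)
        rw [derivative_X, mul_one] at h
        rw [Nat.cast_sub ((des_le w).trans (n.sub_le 1))]
        linear_combination (X - 1) * h

lemma binomialTransform_sub_one_eulerian_succ (n : ℕ) :
    binomialTransform (X - 1) (fun k => eulerian (k + 1)) n =
      (1 + (n : ℝ[X]) * X) * binomialTransform (X - 1) eulerian n +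
        X * (1 - X) * derivative (binomialTransform (X - 1) eulerian n) := by
  simp only [binomialTransform, derivative_sum, mul_sum, ← sum_add_distrib]
  refine sum_congr rfl fun k hk => ?_
  obtain ⟨j, rfl⟩ := Nat.exists_eq_add_of_le (mem_range_succ_iff.mp hk)
  have h := mul_derivative_pow (X - 1 : ℝ[X]) j
  rw [derivative_sub, derivative_X, derivative_one, sub_zero, mul_one] at h
  rw [Nat.add_sub_cancel_left, eulerian_succ, derivative_mul, derivative_natCast, derivative_mul]
  push_cast
  linear_combination (((k + j).choose k : ℝ[X]) * X * eulerian k) * h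

theorem binomialTransform_sub_one_eulerian (n : ℕ) :
    binomialTransform (X - 1) eulerian (n + 1) = X * eulerian (n + 1) := by
  induction n with
  | zero => simp [binomialTransform, sum_range_succ, eulerian_zero, eulerian_one]
  | succ n ih =>
    rw [binomialTransform_succ, binomialTransform_sub_one_eulerian_succ, ih,
      eulerian_succ (n + 1), derivative_mul, derivative_X]
    push_cast
    ring

theorem binomialTransform_X_eulerian (n : ℕ) : binomialTransform X eulerian n = binEulerian n := by
  calc binomialTransform X eulerian n
      = binomialTransform 1 (binomialTransform (X - 1) eulerian) n := by
        rw [binomialTransform_binomialTransform, add_sub_cancel]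
    _ = ∑ k ∈ range (n + 1), (n.choose k : ℝ[X]) * binomialTransform (X - 1) eulerian k :=
        binomialTransform_one_left _ n
    _ = binEulerian n := by
        rw [Nat.range_succ_eq_Icc_zero, ← insert_Icc_add_one_left_eq_Icc n.zero_le,
          sum_insert (by simp), binEulerian, mul_sum]
        congr 1
        · simp [eulerian_zero]
        refine sum_congr rfl fun k hk => ?_
        obtain ⟨m, rfl⟩ := Nat.exists_eq_add_of_le' (mem_Icc.mp hk).1
        rw [binomialTransform_sub_one_eulerian, map_natCast]
        ring

lemma permVal_revPerm_mul {n : ℕ} (w : Equiv.Perm (Fin n)) {i : ℕ} (hi : i < n) :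
    permVal (Fin.revPerm * w) i = n - 1 - permVal w i := by
  simp only [permVal, dif_pos hi, Equiv.Perm.mul_apply, Fin.revPerm_apply, Fin.val_rev]
  omega

lemma des_revPerm_mul {n : ℕ} (w : Equiv.Perm (Fin n)) :
    des (Fin.revPerm * w) = n - 1 - des w := by
  have hflip : ∀ i ∈ range (n - 1),
      permVal (Fin.revPerm * w) (i + 1) < permVal (Fin.revPerm * w) i ↔
        ¬ permVal w (i + 1) < permVal w i := by
    intro i hi
    rw [mem_range] at hi
    have hne : permVal w (i + 1) ≠ permVal w i := by
      simp only [permVal, dif_pos (show i < n by omega), dif_pos (show i + 1 < n by omega)]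
      intro h
      simpa using w.injective (Fin.val_injective h)
    have hlt : permVal w (i + 1) < n := by simp [permVal, show i + 1 < n by omega]
    rw [permVal_revPerm_mul w (by omega), permVal_revPerm_mul w (by omega)]
    omega
  have hsplit := card_filter_add_card_filter_not (s := range (n - 1))
    fun i => permVal w (i + 1) < permVal w i
  rw [card_range] at hsplit
  rw [des, filter_congr hflip, des]
  omega

lemma natDegree_eulerian_le (k : ℕ) : (eulerian k).natDegree ≤ k - 1 :=
  natDegree_sum_le_of_forall_le _ _ fun w _ => (natDegree_X_pow_le _).trans (des_le w)

theorem reflect_eulerian (k : ℕ) : reflect (k - 1) (eulerian k) = eulerian k := by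
  rw [eulerian, reflect_sum]
  simp only [reflect_monomial, revAt_le (des_le _)]
  exact Fintype.sum_equiv (Equiv.mulLeft Fin.revPerm) _ _ fun w => by
    rw [Equiv.coe_mulLeft, des_revPerm_mul]

lemma reflect_X_mul_eulerian {n k : ℕ} (hk : 1 ≤ k) (hkn : k ≤ n) :
    reflect n (X * eulerian k) = X ^ (n - k) * eulerian k := by
  have hdeg : (X * eulerian k).natDegree ≤ 1 + (k - 1) :=
    natDegree_mul_le.trans (add_le_add natDegree_X_le (natDegree_eulerian_le k))
  calc reflect n (X * eulerian k)
      = reflect (1 + (k - 1) + (n - k)) (X * eulerian k * 1) := by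
        rw [mul_one, show 1 + (k - 1) + (n - k) = n by omega]
    _ = X ^ (n - k) * eulerian k := by
        rw [reflect_mul _ _ hdeg (G := n - k) (by simp),
          reflect_mul _ _ natDegree_X_le (natDegree_eulerian_le k), reflect_one_X,
          reflect_eulerian, reflect_one]
        ring

theorem reflect_binEulerian (n : ℕ) : reflect n (binEulerian n) = binEulerian n := by
  conv_rhs => rw [← binomialTransform_X_eulerian]
  rw [binEulerian, reflect_add, reflect_one, mul_sum, reflect_sum, binomialTransform,
    Nat.range_succ_eq_Icc_zero, ← insert_Icc_add_one_left_eq_Icc n.zero_le, sum_insert (by simp)]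
  congr 1
  · simp [eulerian_zero]
  refine sum_congr rfl fun k hk => ?_
  rw [mem_Icc] at hk
  rw [mul_left_comm, reflect_C_mul, reflect_X_mul_eulerian hk.1 hk.2, map_natCast]

lemma natDegree_binEulerian_le (n : ℕ) : (binEulerian n).natDegree ≤ n := by
  rw [← binomialTransform_X_eulerian]
  refine natDegree_sum_le_of_forall_le _ _ fun k hk => ?_
  have := mem_range_succ_iff.mp hk
  calc ((n.choose k : ℝ[X]) * (X ^ (n - k) * eulerian k)).natDegree
      ≤ 0 + ((n - k) + (k - 1)) :=
        natDegree_mul_le.trans <| add_le_add (natDegree_natCast _).le <|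
          natDegree_mul_le.trans <| add_le_add (natDegree_X_pow_le _) (natDegree_eulerian_le k)
    _ ≤ n := by omega

/-- the binomial Eulerian polynomial is symmetric with center `n/2`,
i.e. `xⁿ Ã_n(1/x) = Ã_n(x)`. -/
theorem binEulerian_symmetric (n : ℕ) :
    (∀ i ≤ n, (binEulerian n).coeff i = (binEulerian n).coeff (n - i)) ∧
    (∀ i, n < i → (binEulerian n).coeff i = 0) := by
  refine ⟨fun i hi => ?_, fun i hi => coeff_eq_zero_of_natDegree_lt
    ((natDegree_binEulerian_le n).trans_lt hi)⟩
  conv_lhs => rw [← reflect_binEulerian n]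
  rw [coeff_reflect, revAt_le hi]
end

section
/- For every positive integer n, the polynomial I_n(x) = \sum_{w \in S_n, w^2 = id} x^{des(w)} counting involutions in S_n by descents is symmetric with center (n-1)/2: its coefficient of x^i equals its coefficient of x^{n-1-i} for all i. -/
open Polynomial Finset

/-- `I_n(x) = ∑ x^{des(w)}` over involutions `w ∈ S_n`. -/
noncomputable def involutionEulerian (n : ℕ) : Polynomial ℝ :=
  ∑ w ∈ Finset.univ.filter (fun w : Equiv.Perm (Fin n) => w * w = 1),
    Polynomial.X ^ des w

namespace Strehl


/-- block index of `v` w.r.t. cut set `S`. -/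
def blk (S : Finset ℕ) (v : ℕ) : ℕ := (S.filter (· < v)).card

lemma blk_mono (S : Finset ℕ) {a b : ℕ} (hab : a ≤ b) : blk S a ≤ blk S b := by
  apply Finset.card_le_card
  intro x hx
  simp only [blk, mem_filter] at hx ⊢
  exact ⟨hx.1, lt_of_lt_of_le hx.2 hab⟩

lemma blk_succ_of_not_mem {S : Finset ℕ} {i : ℕ} (h : i ∉ S) : blk S (i+1) = blk S i := by
  unfold blk
  congr 1
  ext x
  simp only [mem_filter]
  constructor
  · rintro ⟨hx, hlt⟩
    refine ⟨hx, ?_⟩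
    rcases Nat.lt_succ_iff_lt_or_eq.mp hlt with h'|h'
    · exact h'
    · exact absurd (h' ▸ hx) h
  · rintro ⟨hx, hlt⟩; exact ⟨hx, by omega⟩

lemma blk_lt_succ_of_mem {S : Finset ℕ} {i : ℕ} (h : i ∈ S) : blk S i < blk S (i+1) := by
  unfold blk
  apply Finset.card_lt_card
  constructor
  · intro x hx
    simp only [mem_filter] at hx ⊢
    exact ⟨hx.1, by omega⟩
  · intro hsub
    have h1 : i ∈ S.filter (· < i+1) := by
      simp only [mem_filter]; exact ⟨h, by omega⟩
    have := hsub h1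
    simp only [mem_filter] at this
    omega



variable {n : ℕ}

def bf (S : Finset ℕ) (v : Fin n) : ℕ := (S.filter (· < v.val)).card

lemma bf_mono {S : Finset ℕ} {a b : Fin n} (hab : a ≤ b) : bf S a ≤ bf S b := by
  apply Finset.card_le_card; intro x hx
  simp only [mem_filter] at hx ⊢
  exact ⟨hx.1, lt_of_lt_of_le hx.2 hab⟩

lemma lt_of_bf_lt {S : Finset ℕ} {a b : Fin n} (h : bf S a < bf S b) : a < b := by
  by_contra hc
  push_neg at hc
  exact absurd (bf_mono (S := S) hc) (by omega)

/-- start of fiber `j`. -/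
def stt (S : Finset ℕ) (n : ℕ) (j : ℕ) : ℕ := ((univ : Finset (Fin n)).filter fun v => bf S v < j).card

/-- size of fiber `j`. -/
def cnt (S : Finset ℕ) (n : ℕ) (j : ℕ) : ℕ := ((univ : Finset (Fin n)).filter fun v => bf S v = j).card

lemma card_filter_lt (v : Fin n) : ((univ : Finset (Fin n)).filter fun u => u < v).card = v.val := by
  have : ((univ : Finset (Fin n)).filter fun u => u < v) = Finset.Iio v := by
    ext u; simp
  rw [this, Fin.card_Iio]

lemma card_filter_le (v : Fin n) : ((univ : Finset (Fin n)).filter fun u => u ≤ v).card = v.val + 1 := by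
  have : ((univ : Finset (Fin n)).filter fun u => u ≤ v) = Finset.Iic v := by
    ext u; simp
  rw [this, Fin.card_Iic]

lemma stt_add_cnt_le (S : Finset ℕ) (j : ℕ) : stt S n j + cnt S n j ≤ n := by
  classical
  rw [stt, cnt, ← Finset.card_union_of_disjoint]
  · calc _ ≤ (univ : Finset (Fin n)).card := Finset.card_le_card (Finset.subset_univ _)
      _ = n := by simp
  · rw [Finset.disjoint_filter]
    intro x _ h1 h2
    omega

/-- fibers of `bf` are intervals. -/
lemma mem_fiber_iff {S : Finset ℕ} {j : ℕ} {v : Fin n} :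
    bf S v = j ↔ stt S n j ≤ v.val ∧ v.val < stt S n j + cnt S n j := by
  classical
  constructor
  · intro h
    constructor
    · rw [← card_filter_lt v]
      apply Finset.card_le_card
      intro u hu
      simp only [mem_filter, mem_univ, true_and] at hu ⊢
      exact lt_of_bf_lt (S := S) (by omega)
    · rw [stt, cnt, ← Finset.card_union_of_disjoint (by rw [Finset.disjoint_filter]; intro x _ h1 h2; omega)]
      have hs : (univ : Finset (Fin n)).filter (fun u => u ≤ v) ⊆
          ((univ : Finset (Fin n)).filter fun u => bf S u < j) ∪ ((univ : Finset (Fin n)).filter fun u => bf S u = j) := by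
        intro u hu
        simp only [mem_filter, mem_union, mem_univ, true_and] at hu ⊢
        have := bf_mono (S := S) hu
        omega
      have := Finset.card_le_card hs
      rw [card_filter_le] at this
      omega
  · rintro ⟨h1, h2⟩
    rcases lt_trichotomy (bf S v) j with h | h | h
    · exfalso
      have hs : (univ : Finset (Fin n)).filter (fun u => u ≤ v) ⊆
          (univ : Finset (Fin n)).filter fun u => bf S u < j := by
        intro u hu
        simp only [mem_filter, mem_univ, true_and] at hu ⊢
        exact lt_of_le_of_lt (bf_mono hu) h
      have := Finset.card_le_card hs
      rw [card_filter_le] at this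
      rw [stt] at h1
      omega
    · exact h
    · exfalso
      have hs : ((univ : Finset (Fin n)).filter fun u => bf S u < j) ∪
            ((univ : Finset (Fin n)).filter fun u => bf S u = j) ⊆
          (univ : Finset (Fin n)).filter (fun u => u < v) := by
        intro u hu
        simp only [mem_filter, mem_union, mem_univ, true_and] at hu ⊢
        apply lt_of_bf_lt (S := S)
        omega
      have := Finset.card_le_card hs
      rw [card_filter_lt, Finset.card_union_of_disjoint (by rw [Finset.disjoint_filter]; intro x _ hx1 hx2; omega)] at this
      rw [stt, cnt] at h2
      omega


lemma bf_def (S : Finset ℕ) (v : Fin n) : bf S v = blk S v.val := rfl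

def tot (g : Fin n → ℕ) (j : ℕ) : ℕ := ((univ : Finset (Fin n)).filter fun q => g q = j).card

def rnk (g : Fin n → ℕ) (p : Fin n) : ℕ :=
  ((univ : Finset (Fin n)).filter fun q => q < p ∧ g q = g p).card

def CountsOk (S : Finset ℕ) (g : Fin n → ℕ) : Prop := ∀ j, tot g j = cnt S n j

lemma countsOk_bf (S : Finset ℕ) : CountsOk S (bf (n := n) S) := fun _ => rfl

lemma rnk_lt_tot (g : Fin n → ℕ) (p : Fin n) : rnk g p < tot g (g p) := by
  classical
  rw [rnk, tot]
  have hmem : p ∈ (univ : Finset (Fin n)).filter fun q => g q = g p := by simp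
  have hsub : ((univ : Finset (Fin n)).filter fun q => q < p ∧ g q = g p) ⊆
      ((univ : Finset (Fin n)).filter fun q => g q = g p).erase p := by
    intro x hx
    simp only [mem_filter, mem_univ, true_and, Finset.mem_erase] at hx ⊢
    exact ⟨Fin.ne_of_lt hx.1, hx.2⟩
  have h1 := Finset.card_le_card hsub
  rw [Finset.card_erase_of_mem hmem] at h1
  have h2 : 0 < ((univ : Finset (Fin n)).filter fun q => g q = g p).card :=
    Finset.card_pos.mpr ⟨p, hmem⟩
  omega

lemma rnk_lt_rnk {g : Fin n → ℕ} {p q : Fin n} (hpq : p < q) (h : g p = g q) :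
    rnk g p < rnk g q := by
  classical
  rw [rnk, rnk]
  have hsub : insert p ((univ : Finset (Fin n)).filter fun r => r < p ∧ g r = g p) ⊆
      ((univ : Finset (Fin n)).filter fun r => r < q ∧ g r = g q) := by
    intro x hx
    rcases Finset.mem_insert.mp hx with h' | h'
    · subst h'; simp only [mem_filter, mem_univ, true_and]; exact ⟨hpq, h⟩
    · simp only [mem_filter, mem_univ, true_and] at h' ⊢
      exact ⟨lt_trans h'.1 hpq, h'.2.trans h⟩
  have hcard := Finset.card_le_card hsub
  rw [Finset.card_insert_of_notMem (by simp)] at hcard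
  omega

lemma eq_of_rnk_eq {g : Fin n → ℕ} {p q : Fin n} (h : g p = g q) (hr : rnk g p = rnk g q) :
    p = q := by
  rcases lt_trichotomy p q with h' | h' | h'
  · exact absurd (rnk_lt_rnk h' h) (by omega)
  · exact h'
  · exact absurd (rnk_lt_rnk h' h.symm) (by omega)

def rD (S : Finset ℕ) (g : Fin n → ℕ) (p : Fin n) : ℕ := stt S n (g p) + rnk g p

def rA (S : Finset ℕ) (g : Fin n → ℕ) (p : Fin n) : ℕ :=
  stt S n (g p) + (cnt S n (g p) - 1 - rnk g p)

variable {S : Finset ℕ} {g : Fin n → ℕ}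

lemma rnk_lt_cnt (hck : CountsOk S g) (p : Fin n) : rnk g p < cnt S n (g p) :=
  hck (g p) ▸ rnk_lt_tot g p

lemma rD_lt (hck : CountsOk S g) (p : Fin n) : rD S g p < n := by
  have h1 := rnk_lt_cnt hck p
  have h2 := stt_add_cnt_le (n := n) S (g p)
  rw [rD]; omega

lemma rA_lt (hck : CountsOk S g) (p : Fin n) : rA S g p < n := by
  have h1 := rnk_lt_cnt hck p
  have h2 := stt_add_cnt_le (n := n) S (g p)
  rw [rA]; omega

lemma bf_rD (hck : CountsOk S g) (p : Fin n) : bf S ⟨rD S g p, rD_lt hck p⟩ = g p := by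
  have h1 := rnk_lt_cnt hck p
  have h2 : stt S n (g p) ≤ rD S g p := Nat.le_add_right _ _
  have h3 : rD S g p < stt S n (g p) + cnt S n (g p) := by rw [rD]; omega
  exact mem_fiber_iff.mpr ⟨h2, h3⟩

lemma bf_rA (hck : CountsOk S g) (p : Fin n) : bf S ⟨rA S g p, rA_lt hck p⟩ = g p := by
  have h1 := rnk_lt_cnt hck p
  have h2 : stt S n (g p) ≤ rA S g p := Nat.le_add_right _ _
  have h3 : rA S g p < stt S n (g p) + cnt S n (g p) := by rw [rA]; omega
  exact mem_fiber_iff.mpr ⟨h2, h3⟩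

lemma rD_inj (hck : CountsOk S g) :
    Function.Injective (fun p => (⟨rD S g p, rD_lt hck p⟩ : Fin n)) := by
  intro p q hpq
  have hg : g p = g q := by
    rw [← bf_rD hck p, ← bf_rD hck q]
    exact congrArg (bf S) hpq
  have hv : rD S g p = rD S g q := congrArg Fin.val hpq
  simp only [rD] at hv
  rw [hg] at hv
  exact eq_of_rnk_eq hg (by omega)

lemma rA_inj (hck : CountsOk S g) :
    Function.Injective (fun p => (⟨rA S g p, rA_lt hck p⟩ : Fin n)) := by
  intro p q hpq
  have hg : g p = g q := by
    rw [← bf_rA hck p, ← bf_rA hck q]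
    exact congrArg (bf S) hpq
  have hv : rA S g p = rA S g q := congrArg Fin.val hpq
  have h1 := rnk_lt_cnt hck p
  have h2 := rnk_lt_cnt hck q
  simp only [rA] at hv
  rw [hg] at hv h1
  exact eq_of_rnk_eq hg (by omega)

open Classical in
/-- "descent-style" reconstruction permutation. -/
noncomputable def uD (S : Finset ℕ) (g : Fin n → ℕ) : Equiv.Perm (Fin n) :=
  if hck : CountsOk S g then
    Equiv.ofBijective _ (Finite.injective_iff_bijective.mp (rD_inj hck))
  else 1

open Classical in
/-- "ascent-style" reconstruction permutation. -/
noncomputable def uA (S : Finset ℕ) (g : Fin n → ℕ) : Equiv.Perm (Fin n) :=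
  if hck : CountsOk S g then
    Equiv.ofBijective _ (Finite.injective_iff_bijective.mp (rA_inj hck))
  else 1

lemma uD_apply (hck : CountsOk S g) (p : Fin n) : uD S g p = ⟨rD S g p, rD_lt hck p⟩ := by
  rw [uD, dif_pos hck]; rfl

lemma uA_apply (hck : CountsOk S g) (p : Fin n) : uA S g p = ⟨rA S g p, rA_lt hck p⟩ := by
  rw [uA, dif_pos hck]; rfl

lemma bf_uD (hck : CountsOk S g) (p : Fin n) : bf S (uD S g p) = g p := by
  rw [uD_apply hck]; exact bf_rD hck p

lemma bf_uA (hck : CountsOk S g) (p : Fin n) : bf S (uA S g p) = g p := by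
  rw [uA_apply hck]; exact bf_rA hck p

lemma tot_comp (σ : Equiv.Perm (Fin n)) (f : Fin n → ℕ) (j : ℕ) :
    tot (fun p => f (σ p)) j = tot f j := by
  classical
  rw [tot, tot]
  apply Finset.card_bij (fun a _ => σ a)
  · intro a ha
    simp only [mem_filter, mem_univ, true_and] at ha ⊢
    exact ha
  · intro a _ b _ hab
    exact σ.injective hab
  · intro b hb
    refine ⟨σ.symm b, ?_, by simp⟩
    simp only [mem_filter, mem_univ, true_and] at hb ⊢
    simpa using hb

lemma countsOk_comp (S : Finset ℕ) (σ : Equiv.Perm (Fin n)) :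
    CountsOk S (fun p => bf S (σ p)) := fun j => by
  rw [tot_comp σ (bf S) j]; exact countsOk_bf S j

/-- fiber-reversing permutation. -/
noncomputable def rho (S : Finset ℕ) (n : ℕ) : Equiv.Perm (Fin n) := uA S (bf S)

lemma bf_rho (S : Finset ℕ) (p : Fin n) : bf S (rho S n p) = bf S p := bf_uA (countsOk_bf S) p

lemma rho_rev {S : Finset ℕ} {p q : Fin n} (hpq : p < q) (h : bf S p = bf S q) :
    rho S n q < rho S n p := by
  have h1 := rnk_lt_cnt (countsOk_bf S) p
  have h2 := rnk_lt_cnt (countsOk_bf S) q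
  have h3 := rnk_lt_rnk hpq h
  rw [Fin.lt_def, rho, uA_apply (countsOk_bf S), uA_apply (countsOk_bf S)]
  show rA S (bf S) q < rA S (bf S) p
  rw [rA, rA, h] at *
  omega

/-- cell count matrix. -/
def M (S : Finset ℕ) (w : Equiv.Perm (Fin n)) (i j : ℕ) : ℕ :=
  ((univ : Finset (Fin n)).filter fun p => bf S p = i ∧ bf S (w p) = j).card

lemma card_filter_comp (σ : Equiv.Perm (Fin n)) (P : Fin n → Prop) [DecidablePred P] :
    ((univ : Finset (Fin n)).filter fun p => P (σ p)).card =
      ((univ : Finset (Fin n)).filter P).card := by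
  apply Finset.card_bij (fun a _ => σ a)
  · intro a ha; simp only [mem_filter, mem_univ, true_and] at ha ⊢; exact ha
  · intro a _ b _ hab; exact σ.injective hab
  · intro b hb
    refine ⟨σ.symm b, ?_, by simp⟩
    simp only [mem_filter, mem_univ, true_and] at hb ⊢
    simpa using hb

lemma M_inv (S : Finset ℕ) (w : Equiv.Perm (Fin n)) (i j : ℕ) : M S w⁻¹ i j = M S w j i := by
  classical
  rw [M, M]
  apply Finset.card_bij (fun a _ => w⁻¹ a)
  · intro a ha
    simp only [mem_filter, mem_univ, true_and] at ha ⊢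
    refine ⟨ha.2, ?_⟩
    rw [← Equiv.Perm.mul_apply, mul_inv_cancel, Equiv.Perm.one_apply]; exact ha.1
  · intro a _ b _ hab; exact w⁻¹.injective hab
  · intro b hb
    simp only [mem_filter, mem_univ, true_and] at hb ⊢
    exact ⟨w b, ⟨hb.2, by rw [← Equiv.Perm.mul_apply, inv_mul_cancel, Equiv.Perm.one_apply]; exact hb.1⟩, by rw [← Equiv.Perm.mul_apply, inv_mul_cancel, Equiv.Perm.one_apply]⟩

/-- the symm of a `uA` reverses order within fibers of `bf`. -/
lemma uA_symm_rev {S : Finset ℕ} {g : Fin n → ℕ} (hck : CountsOk S g) {v v' : Fin n}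
    (hvv : v < v') (h : bf S v = bf S v') : (uA S g).symm v' < (uA S g).symm v := by
  set p := (uA S g).symm v with hp
  set q := (uA S g).symm v' with hq
  have hup : uA S g p = v := (uA S g).apply_symm_apply v
  have huq : uA S g q = v' := (uA S g).apply_symm_apply v'
  have hgp : g p = bf S v := by rw [← hup]; exact (bf_uA hck p).symm
  have hgq : g q = bf S v' := by rw [← huq]; exact (bf_uA hck q).symm
  have hg : g p = g q := by rw [hgp, hgq, h]
  have hvp : v.val = rA S g p := by rw [← hup, uA_apply hck]
  have hvq : v'.val = rA S g q := by rw [← huq, uA_apply hck]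
  have h1 := rnk_lt_cnt hck p
  have h2 := rnk_lt_cnt hck q
  have hrr : rnk g q < rnk g p := by
    rw [rA] at hvp hvq
    rw [hg] at hvp h1
    have : v.val < v'.val := hvv
    omega
  rcases lt_trichotomy q p with h' | h' | h'
  · exact h'
  · exact absurd h' (by intro he; rw [he] at hrr; omega)
  · exact absurd (rnk_lt_rnk h' hg) (by omega)

/-- the symm of a `uD` preserves order within fibers of `bf`. -/
lemma uD_symm_mono {S : Finset ℕ} {g : Fin n → ℕ} (hck : CountsOk S g) {v v' : Fin n}
    (hvv : v < v') (h : bf S v = bf S v') : (uD S g).symm v < (uD S g).symm v' := by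
  set p := (uD S g).symm v with hp
  set q := (uD S g).symm v' with hq
  have hup : uD S g p = v := (uD S g).apply_symm_apply v
  have huq : uD S g q = v' := (uD S g).apply_symm_apply v'
  have hgp : g p = bf S v := by rw [← hup]; exact (bf_uD hck p).symm
  have hgq : g q = bf S v' := by rw [← huq]; exact (bf_uD hck q).symm
  have hg : g p = g q := by rw [hgp, hgq, h]
  have hvp : v.val = rD S g p := by rw [← hup, uD_apply hck]
  have hvq : v'.val = rD S g q := by rw [← huq, uD_apply hck]
  have hrr : rnk g p < rnk g q := by
    rw [rD] at hvp hvq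
    rw [hg] at hvp
    have : v.val < v'.val := hvv
    omega
  rcases lt_trichotomy p q with h' | h' | h'
  · exact h'
  · exact absurd h' (by intro he; rw [he] at hrr; omega)
  · exact absurd (rnk_lt_rnk h' hg.symm) (by omega)

/-- `uA` of a fiber-antitone `g` is strictly decreasing on fibers. -/
lemma uA_fiber_rev {S : Finset ℕ} {g : Fin n → ℕ} (hck : CountsOk S g)
    (hg : ∀ p q : Fin n, p < q → bf S p = bf S q → g q ≤ g p)
    {p q : Fin n} (hpq : p < q) (h : bf S p = bf S q) : uA S g q < uA S g p := by
  rcases eq_or_lt_of_le (hg p q hpq h) with he | hlt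
  · have h1 := rnk_lt_cnt hck p
    have h2 := rnk_lt_cnt hck q
    have h3 := rnk_lt_rnk hpq he.symm
    rw [Fin.lt_def, uA_apply hck, uA_apply hck]
    show rA S g q < rA S g p
    rw [rA, rA, he] at *
    omega
  · apply lt_of_bf_lt (S := S)
    rw [bf_uA hck, bf_uA hck]
    exact hlt

/-- `uD` of a fiber-monotone `g` is strictly increasing on fibers. -/
lemma uD_fiber_mono {S : Finset ℕ} {g : Fin n → ℕ} (hck : CountsOk S g)
    (hg : ∀ p q : Fin n, p < q → bf S p = bf S q → g p ≤ g q)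
    {p q : Fin n} (hpq : p < q) (h : bf S p = bf S q) : uD S g p < uD S g q := by
  rcases eq_or_lt_of_le (hg p q hpq h) with he | hlt
  · have h3 := rnk_lt_rnk hpq he
    rw [Fin.lt_def, uD_apply hck, uD_apply hck]
    show rD S g p < rD S g q
    rw [rD, rD, he]
    omega
  · apply lt_of_bf_lt (S := S)
    rw [bf_uD hck, bf_uD hck]
    exact hlt

lemma card_lt_in_fiber (S : Finset ℕ) (v : Fin n) :
    ((univ : Finset (Fin n)).filter fun u => u < v ∧ bf S u = bf S v).card
      = v.val - stt S n (bf S v) := by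
  classical
  have hBsubA : ((univ : Finset (Fin n)).filter fun u => bf S u < bf S v) ⊆
      ((univ : Finset (Fin n)).filter fun u => u < v) := by
    intro u hu
    simp only [mem_filter, mem_univ, true_and] at hu ⊢
    exact lt_of_bf_lt (S := S) hu
  have hset : ((univ : Finset (Fin n)).filter fun u => u < v ∧ bf S u = bf S v) =
      ((univ : Finset (Fin n)).filter fun u => u < v) \
        ((univ : Finset (Fin n)).filter fun u => bf S u < bf S v) := by
    ext u
    simp only [mem_filter, mem_univ, true_and, Finset.mem_sdiff]
    constructor
    · rintro ⟨h1, h2⟩; exact ⟨h1, by omega⟩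
    · rintro ⟨h1, h2⟩
      refine ⟨h1, ?_⟩
      have := bf_mono (S := S) (le_of_lt h1)
      omega
  rw [hset, Finset.card_sdiff_of_subset hBsubA, card_filter_lt]
  rfl

lemma card_le_in_fiber (S : Finset ℕ) (v : Fin n) :
    ((univ : Finset (Fin n)).filter fun u => u ≤ v ∧ bf S u = bf S v).card
      = v.val + 1 - stt S n (bf S v) := by
  classical
  have hBsubA : ((univ : Finset (Fin n)).filter fun u => bf S u < bf S v) ⊆
      ((univ : Finset (Fin n)).filter fun u => u ≤ v) := by
    intro u hu
    simp only [mem_filter, mem_univ, true_and] at hu ⊢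
    exact le_of_lt (lt_of_bf_lt (S := S) hu)
  have hset : ((univ : Finset (Fin n)).filter fun u => u ≤ v ∧ bf S u = bf S v) =
      ((univ : Finset (Fin n)).filter fun u => u ≤ v) \
        ((univ : Finset (Fin n)).filter fun u => bf S u < bf S v) := by
    ext u
    simp only [mem_filter, mem_univ, true_and, Finset.mem_sdiff]
    constructor
    · rintro ⟨h1, h2⟩; exact ⟨h1, by omega⟩
    · rintro ⟨h1, h2⟩
      refine ⟨h1, ?_⟩
      have := bf_mono (S := S) h1
      omega
  rw [hset, Finset.card_sdiff_of_subset hBsubA, card_filter_le]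
  rfl

lemma card_gt_in_fiber (S : Finset ℕ) (v : Fin n) :
    ((univ : Finset (Fin n)).filter fun u => v < u ∧ bf S u = bf S v).card
      = stt S n (bf S v) + cnt S n (bf S v) - 1 - v.val := by
  classical
  have hsplit := Finset.card_filter_add_card_filter_not
    (s := (univ : Finset (Fin n)).filter fun u => bf S u = bf S v) (p := fun u => u ≤ v)
  have h1 : (((univ : Finset (Fin n)).filter fun u => bf S u = bf S v).filter fun u => u ≤ v)
      = ((univ : Finset (Fin n)).filter fun u => u ≤ v ∧ bf S u = bf S v) := by
    ext u; simp only [mem_filter, mem_univ, true_and]; tauto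
  have h2 : (((univ : Finset (Fin n)).filter fun u => bf S u = bf S v).filter fun u => ¬ u ≤ v)
      = ((univ : Finset (Fin n)).filter fun u => v < u ∧ bf S u = bf S v) := by
    ext u
    simp only [mem_filter, mem_univ, true_and, not_le]
    tauto
  rw [h1, h2] at hsplit
  have h3 := card_le_in_fiber S v
  have hb : stt S n (bf S v) ≤ v.val ∧ v.val < stt S n (bf S v) + cnt S n (bf S v) :=
    mem_fiber_iff.mp rfl
  have : (((univ : Finset (Fin n)).filter fun u => bf S u = bf S v)).card = cnt S n (bf S v) := rfl
  omega

/-- a fiber-increasing permutation with fiber-increasing inverse reconstructs by `rD`. -/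
lemma val_eq_rD {S : Finset ℕ} (w : Equiv.Perm (Fin n))
    (h2 : ∀ v v' : Fin n, v < v' → bf S v = bf S v' → w.symm v < w.symm v')
    (p : Fin n) : (w p).val = rD S (fun q => bf S (w q)) p := by
  classical
  have hA : rnk (fun q => bf S (w q)) p
      = ((univ : Finset (Fin n)).filter fun u => u < w p ∧ bf S u = bf S (w p)).card := by
    rw [rnk]
    apply Finset.card_bij (fun q _ => w q)
    · intro q hq
      simp only [mem_filter, mem_univ, true_and] at hq ⊢
      refine ⟨?_, hq.2⟩
      rcases lt_trichotomy (w q) (w p) with h' | h' | h'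
      · exact h'
      · exact absurd (w.injective h') (by intro he; rw [he] at hq; exact lt_irrefl _ hq.1)
      · exfalso
        have := h2 (w p) (w q) h' hq.2.symm
        rw [w.symm_apply_apply, w.symm_apply_apply] at this
        exact absurd hq.1 (not_lt.mpr (le_of_lt this))
    · intro a _ b _ hab; exact w.injective hab
    · intro u hu
      simp only [mem_filter, mem_univ, true_and] at hu ⊢
      refine ⟨w.symm u, ⟨?_, ?_⟩, w.apply_symm_apply u⟩
      · have := h2 u (w p) hu.1 hu.2
        rwa [w.symm_apply_apply] at this
      · rw [w.apply_symm_apply]; exact hu.2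
  have hbd := mem_fiber_iff.mp (rfl : bf S (w p) = bf S (w p))
  rw [rD, hA, card_lt_in_fiber]
  omega

/-- a fiber-decreasing permutation with fiber-decreasing inverse reconstructs by `rA`. -/
lemma val_eq_rA {S : Finset ℕ} (w : Equiv.Perm (Fin n))
    (h2 : ∀ v v' : Fin n, v < v' → bf S v = bf S v' → w.symm v' < w.symm v)
    (p : Fin n) : (w p).val = rA S (fun q => bf S (w q)) p := by
  classical
  have hA : rnk (fun q => bf S (w q)) p
      = ((univ : Finset (Fin n)).filter fun u => w p < u ∧ bf S u = bf S (w p)).card := by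
    rw [rnk]
    apply Finset.card_bij (fun q _ => w q)
    · intro q hq
      simp only [mem_filter, mem_univ, true_and] at hq ⊢
      refine ⟨?_, hq.2⟩
      rcases lt_trichotomy (w p) (w q) with h' | h' | h'
      · exact h'
      · exact absurd (w.injective h') (by intro he; rw [he] at hq; exact lt_irrefl _ hq.1)
      · exfalso
        have := h2 (w q) (w p) h' hq.2
        rw [w.symm_apply_apply, w.symm_apply_apply] at this
        exact absurd hq.1 (not_lt.mpr (le_of_lt this))
    · intro a _ b _ hab; exact w.injective hab
    · intro u hu
      simp only [mem_filter, mem_univ, true_and] at hu ⊢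
      refine ⟨w.symm u, ⟨?_, ?_⟩, w.apply_symm_apply u⟩
      · have := h2 (w p) u hu.1 hu.2.symm
        rwa [w.symm_apply_apply] at this
      · rw [w.apply_symm_apply]; exact hu.2
  have hbd := mem_fiber_iff.mp (rfl : bf S (w p) = bf S (w p))
  rw [rA, hA, card_gt_in_fiber]
  omega

lemma fiber_le_of_counts {S : Finset ℕ} (f f' : Fin n → ℕ)
    (hm : ∀ p q : Fin n, p < q → bf S p = bf S q → f p ≤ f q)
    (hm' : ∀ p q : Fin n, p < q → bf S p = bf S q → f' p ≤ f' q)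
    (hc : ∀ i j, ((univ : Finset (Fin n)).filter fun p => bf S p = i ∧ f p = j).card
      = ((univ : Finset (Fin n)).filter fun p => bf S p = i ∧ f' p = j).card)
    (x : Fin n) : f' x ≤ f x := by
  classical
  by_contra hcon
  push_neg at hcon
  set j := f x with hj
  set i := bf S x with hi
  have hbiU : ∀ (F : Fin n → ℕ), ((univ : Finset (Fin n)).filter fun p => bf S p = i ∧ F p ≤ j)
      = (Finset.range (j+1)).biUnion fun j' =>
          (univ : Finset (Fin n)).filter fun p => bf S p = i ∧ F p = j' := by
    intro F
    ext y
    simp only [mem_filter, mem_univ, true_and, Finset.mem_biUnion, Finset.mem_range]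
    constructor
    · rintro ⟨h1, h2⟩; exact ⟨F y, by omega, h1, rfl⟩
    · rintro ⟨j', hj', h1, h2⟩; exact ⟨h1, by omega⟩
  have hdisj : ∀ (F : Fin n → ℕ), ∀ a ∈ Finset.range (j+1), ∀ b ∈ Finset.range (j+1), a ≠ b →
      Disjoint ((univ : Finset (Fin n)).filter fun p => bf S p = i ∧ F p = a)
        ((univ : Finset (Fin n)).filter fun p => bf S p = i ∧ F p = b) := by
    intro F a _ b _ hab
    rw [Finset.disjoint_filter]
    rintro y _ ⟨_, h1⟩ ⟨_, h2⟩
    omega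
  have hcards : ((univ : Finset (Fin n)).filter fun p => bf S p = i ∧ f p ≤ j).card
      = ((univ : Finset (Fin n)).filter fun p => bf S p = i ∧ f' p ≤ j).card := by
    rw [hbiU f, hbiU f', Finset.card_biUnion (hdisj f), Finset.card_biUnion (hdisj f')]
    exact Finset.sum_congr rfl fun j' _ => hc i j'
  have hlow : ((univ : Finset (Fin n)).filter fun u => u ≤ x ∧ bf S u = bf S x) ⊆
      ((univ : Finset (Fin n)).filter fun p => bf S p = i ∧ f p ≤ j) := by
    intro u hu
    simp only [mem_filter, mem_univ, true_and] at hu ⊢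
    refine ⟨hu.2, ?_⟩
    rcases eq_or_lt_of_le hu.1 with he | hlt
    · rw [he]
    · exact hm u x hlt hu.2
  have hupp : ((univ : Finset (Fin n)).filter fun p => bf S p = i ∧ f' p ≤ j) ⊆
      ((univ : Finset (Fin n)).filter fun u => u < x ∧ bf S u = bf S x) := by
    intro u hu
    simp only [mem_filter, mem_univ, true_and] at hu ⊢
    refine ⟨?_, hu.1⟩
    rcases lt_trichotomy u x with h' | h' | h'
    · exact h'
    · exfalso; rw [h'] at hu; omega
    · exfalso
      have := hm' x u h' hu.1.symm
      omega
  have c1 := Finset.card_le_card hlow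
  have c2 := Finset.card_le_card hupp
  rw [card_le_in_fiber] at c1
  rw [card_lt_in_fiber] at c2
  have hbd := mem_fiber_iff.mp (rfl : bf S x = bf S x)
  omega

lemma fiber_eq_of_counts {S : Finset ℕ} (f f' : Fin n → ℕ)
    (hm : ∀ p q : Fin n, p < q → bf S p = bf S q → f p ≤ f q)
    (hm' : ∀ p q : Fin n, p < q → bf S p = bf S q → f' p ≤ f' q)
    (hc : ∀ i j, ((univ : Finset (Fin n)).filter fun p => bf S p = i ∧ f p = j).card
      = ((univ : Finset (Fin n)).filter fun p => bf S p = i ∧ f' p = j).card) :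
    f = f' := by
  funext x
  exact le_antisymm (fiber_le_of_counts f' f hm' hm (fun i j => (hc i j).symm) x)
    (fiber_le_of_counts f f' hm hm' hc x)

lemma fiber_le_of_counts_anti {S : Finset ℕ} (f f' : Fin n → ℕ)
    (hm : ∀ p q : Fin n, p < q → bf S p = bf S q → f q ≤ f p)
    (hm' : ∀ p q : Fin n, p < q → bf S p = bf S q → f' q ≤ f' p)
    (hc : ∀ i j, ((univ : Finset (Fin n)).filter fun p => bf S p = i ∧ f p = j).card
      = ((univ : Finset (Fin n)).filter fun p => bf S p = i ∧ f' p = j).card)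
    (x : Fin n) : f' x ≤ f x := by
  classical
  by_contra hcon
  push_neg at hcon
  set j := f x with hj
  set i := bf S x with hi
  have hbiU : ∀ (F : Fin n → ℕ), ((univ : Finset (Fin n)).filter fun p => bf S p = i ∧ F p ≤ j)
      = (Finset.range (j+1)).biUnion fun j' =>
          (univ : Finset (Fin n)).filter fun p => bf S p = i ∧ F p = j' := by
    intro F
    ext y
    simp only [mem_filter, mem_univ, true_and, Finset.mem_biUnion, Finset.mem_range]
    constructor
    · rintro ⟨h1, h2⟩; exact ⟨F y, by omega, h1, rfl⟩
    · rintro ⟨j', hj', h1, h2⟩; exact ⟨h1, by omega⟩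
  have hdisj : ∀ (F : Fin n → ℕ), ∀ a ∈ Finset.range (j+1), ∀ b ∈ Finset.range (j+1), a ≠ b →
      Disjoint ((univ : Finset (Fin n)).filter fun p => bf S p = i ∧ F p = a)
        ((univ : Finset (Fin n)).filter fun p => bf S p = i ∧ F p = b) := by
    intro F a _ b _ hab
    rw [Finset.disjoint_filter]
    rintro y _ ⟨_, h1⟩ ⟨_, h2⟩
    omega
  have hcards : ((univ : Finset (Fin n)).filter fun p => bf S p = i ∧ f p ≤ j).card
      = ((univ : Finset (Fin n)).filter fun p => bf S p = i ∧ f' p ≤ j).card := by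
    rw [hbiU f, hbiU f', Finset.card_biUnion (hdisj f), Finset.card_biUnion (hdisj f')]
    exact Finset.sum_congr rfl fun j' _ => hc i j'
  have hlow : ((univ : Finset (Fin n)).filter fun u => x ≤ u ∧ bf S u = bf S x) ⊆
      ((univ : Finset (Fin n)).filter fun p => bf S p = i ∧ f p ≤ j) := by
    intro u hu
    simp only [mem_filter, mem_univ, true_and] at hu ⊢
    refine ⟨hu.2, ?_⟩
    rcases eq_or_lt_of_le hu.1 with he | hlt
    · rw [← he]
    · exact hm x u hlt hu.2.symm
  have hupp : ((univ : Finset (Fin n)).filter fun p => bf S p = i ∧ f' p ≤ j) ⊆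
      ((univ : Finset (Fin n)).filter fun u => x < u ∧ bf S u = bf S x) := by
    intro u hu
    simp only [mem_filter, mem_univ, true_and] at hu ⊢
    refine ⟨?_, hu.1⟩
    rcases lt_trichotomy x u with h' | h' | h'
    · exact h'
    · exfalso; rw [← h'] at hu; omega
    · exfalso
      have := hm' u x h' hu.1
      omega
  have c1 := Finset.card_le_card hlow
  have c2 := Finset.card_le_card hupp
  have e1 : ((univ : Finset (Fin n)).filter fun u => x ≤ u ∧ bf S u = bf S x).card
      = stt S n (bf S x) + cnt S n (bf S x) - x.val := by
    have hgt := card_gt_in_fiber S x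
    have hsplit : ((univ : Finset (Fin n)).filter fun u => x ≤ u ∧ bf S u = bf S x)
        = insert x ((univ : Finset (Fin n)).filter fun u => x < u ∧ bf S u = bf S x) := by
      ext u
      simp only [mem_filter, mem_univ, true_and, Finset.mem_insert]
      constructor
      · rintro ⟨h1, h2⟩
        rcases eq_or_lt_of_le h1 with he | hlt
        · left; exact he.symm
        · right; exact ⟨hlt, h2⟩
      · rintro (he | ⟨h1, h2⟩)
        · subst he; exact ⟨le_refl _, rfl⟩
        · exact ⟨le_of_lt h1, h2⟩
    rw [hsplit, Finset.card_insert_of_notMem (by simp)]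
    have hbd := mem_fiber_iff.mp (rfl : bf S x = bf S x)
    omega
  rw [e1] at c1
  rw [card_gt_in_fiber] at c2
  have hbd := mem_fiber_iff.mp (rfl : bf S x = bf S x)
  omega

lemma fiber_eq_of_counts_anti {S : Finset ℕ} (f f' : Fin n → ℕ)
    (hm : ∀ p q : Fin n, p < q → bf S p = bf S q → f q ≤ f p)
    (hm' : ∀ p q : Fin n, p < q → bf S p = bf S q → f' q ≤ f' p)
    (hc : ∀ i j, ((univ : Finset (Fin n)).filter fun p => bf S p = i ∧ f p = j).card
      = ((univ : Finset (Fin n)).filter fun p => bf S p = i ∧ f' p = j).card) :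
    f = f' := by
  funext x
  exact le_antisymm (fiber_le_of_counts_anti f' f hm' hm (fun i j => (hc i j).symm) x)
    (fiber_le_of_counts_anti f f' hm hm' hc x)

def IncOn (S : Finset ℕ) (w : Equiv.Perm (Fin n)) : Prop :=
  ∀ p q : Fin n, p < q → bf S p = bf S q → w p < w q

def DecOn (S : Finset ℕ) (w : Equiv.Perm (Fin n)) : Prop :=
  ∀ p q : Fin n, p < q → bf S p = bf S q → w q < w p

lemma uniqD {S : Finset ℕ} (w w' : Equiv.Perm (Fin n))
    (hw1 : IncOn S w) (hw2 : ∀ v v' : Fin n, v < v' → bf S v = bf S v' → w.symm v < w.symm v')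
    (hw1' : IncOn S w') (hw2' : ∀ v v' : Fin n, v < v' → bf S v = bf S v' → w'.symm v < w'.symm v')
    (hM : ∀ i j, M S w i j = M S w' i j) : w = w' := by
  have hg : (fun q => bf S (w q)) = (fun q => bf S (w' q)) := by
    apply fiber_eq_of_counts
    · intro p q hpq h
      exact bf_mono (le_of_lt (hw1 p q hpq h))
    · intro p q hpq h
      exact bf_mono (le_of_lt (hw1' p q hpq h))
    · exact hM
  apply Equiv.ext; intro p; apply Fin.ext
  rw [val_eq_rD w hw2 p, val_eq_rD w' hw2' p, hg]

lemma uniqA {S : Finset ℕ} (w w' : Equiv.Perm (Fin n))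
    (hw1 : DecOn S w) (hw2 : ∀ v v' : Fin n, v < v' → bf S v = bf S v' → w.symm v' < w.symm v)
    (hw1' : DecOn S w') (hw2' : ∀ v v' : Fin n, v < v' → bf S v = bf S v' → w'.symm v' < w'.symm v)
    (hM : ∀ i j, M S w i j = M S w' i j) : w = w' := by
  have hg : (fun q => bf S (w q)) = (fun q => bf S (w' q)) := by
    apply fiber_eq_of_counts_anti
    · intro p q hpq h
      exact bf_mono (le_of_lt (hw1 p q hpq h))
    · intro p q hpq h
      exact bf_mono (le_of_lt (hw1' p q hpq h))
    · exact hM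
  apply Equiv.ext; intro p; apply Fin.ext
  rw [val_eq_rA w hw2 p, val_eq_rA w' hw2' p, hg]

noncomputable def Phi (S : Finset ℕ) (w : Equiv.Perm (Fin n)) : Equiv.Perm (Fin n) :=
  uA S fun p => bf S (w (rho S n p))

noncomputable def Psi (S : Finset ℕ) (w : Equiv.Perm (Fin n)) : Equiv.Perm (Fin n) :=
  uD S fun p => bf S (w (rho S n p))

lemma countsOk_g (S : Finset ℕ) (w : Equiv.Perm (Fin n)) :
    CountsOk S (fun p => bf S (w (rho S n p))) :=
  countsOk_comp S ((rho S n).trans w)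

lemma g_anti {S : Finset ℕ} {w : Equiv.Perm (Fin n)} (hw : IncOn S w) :
    ∀ p q : Fin n, p < q → bf S p = bf S q →
      bf S (w (rho S n q)) ≤ bf S (w (rho S n p)) := by
  intro p q hpq h
  have h1 : rho S n q < rho S n p := rho_rev hpq h
  have h2 : bf S (rho S n q) = bf S (rho S n p) := by rw [bf_rho, bf_rho, h]
  exact bf_mono (le_of_lt (hw _ _ h1 h2))

lemma g_mono {S : Finset ℕ} {w : Equiv.Perm (Fin n)} (hw : DecOn S w) :
    ∀ p q : Fin n, p < q → bf S p = bf S q →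
      bf S (w (rho S n p)) ≤ bf S (w (rho S n q)) := by
  intro p q hpq h
  have h1 : rho S n q < rho S n p := rho_rev hpq h
  have h2 : bf S (rho S n q) = bf S (rho S n p) := by rw [bf_rho, bf_rho, h]
  exact bf_mono (le_of_lt (hw _ _ h1 h2))

lemma Phi_dec {S : Finset ℕ} {w : Equiv.Perm (Fin n)} (hw : IncOn S w) :
    DecOn S (Phi S w) := fun p q hpq h =>
  uA_fiber_rev (countsOk_g S w) (g_anti hw) hpq h

lemma Psi_inc {S : Finset ℕ} {w : Equiv.Perm (Fin n)} (hw : DecOn S w) :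
    IncOn S (Psi S w) := fun p q hpq h =>
  uD_fiber_mono (countsOk_g S w) (g_mono hw) hpq h

lemma Phi_symm_rev {S : Finset ℕ} (w : Equiv.Perm (Fin n)) :
    ∀ v v' : Fin n, v < v' → bf S v = bf S v' →
      (Phi S w).symm v' < (Phi S w).symm v := fun _ _ hvv h =>
  uA_symm_rev (countsOk_g S w) hvv h

lemma Psi_symm_mono {S : Finset ℕ} (w : Equiv.Perm (Fin n)) :
    ∀ v v' : Fin n, v < v' → bf S v = bf S v' →
      (Psi S w).symm v < (Psi S w).symm v' := fun _ _ hvv h =>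
  uD_symm_mono (countsOk_g S w) hvv h

lemma M_Phi (S : Finset ℕ) (w : Equiv.Perm (Fin n)) (i j : ℕ) :
    M S (Phi S w) i j = M S w i j := by
  classical
  rw [M, M]
  have h1 : ((univ : Finset (Fin n)).filter fun p => bf S p = i ∧ bf S (Phi S w p) = j)
      = ((univ : Finset (Fin n)).filter fun p =>
          bf S (rho S n p) = i ∧ bf S (w (rho S n p)) = j) := by
    apply Finset.filter_congr
    intro p _
    rw [Phi, bf_uA (countsOk_g S w), bf_rho]
  rw [h1]
  exact card_filter_comp (rho S n) (fun q => bf S q = i ∧ bf S (w q) = j)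

lemma M_Psi (S : Finset ℕ) (w : Equiv.Perm (Fin n)) (i j : ℕ) :
    M S (Psi S w) i j = M S w i j := by
  classical
  rw [M, M]
  have h1 : ((univ : Finset (Fin n)).filter fun p => bf S p = i ∧ bf S (Psi S w p) = j)
      = ((univ : Finset (Fin n)).filter fun p =>
          bf S (rho S n p) = i ∧ bf S (w (rho S n p)) = j) := by
    apply Finset.filter_congr
    intro p _
    rw [Psi, bf_uD (countsOk_g S w), bf_rho]
  rw [h1]
  exact card_filter_comp (rho S n) (fun q => bf S q = i ∧ bf S (w q) = j)

lemma symm_inc_of_inv {S : Finset ℕ} {w : Equiv.Perm (Fin n)} (hinv : w⁻¹ = w)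
    (hw : IncOn S w) :
    ∀ v v' : Fin n, v < v' → bf S v = bf S v' → w.symm v < w.symm v' := by
  intro v v' hvv h
  have : w.symm = w := by rw [← Equiv.Perm.inv_def, hinv]
  rw [this]
  exact hw v v' hvv h

lemma symm_dec_of_inv {S : Finset ℕ} {w : Equiv.Perm (Fin n)} (hinv : w⁻¹ = w)
    (hw : DecOn S w) :
    ∀ v v' : Fin n, v < v' → bf S v = bf S v' → w.symm v' < w.symm v := by
  intro v v' hvv h
  have : w.symm = w := by rw [← Equiv.Perm.inv_def, hinv]
  rw [this]
  exact hw v v' hvv h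

lemma inv_symm_apply (w : Equiv.Perm (Fin n)) (v : Fin n) : w⁻¹ v = w.symm v := rfl

lemma Phi_involutive {S : Finset ℕ} {w : Equiv.Perm (Fin n)} (hinv : w⁻¹ = w)
    (hw : IncOn S w) : (Phi S w)⁻¹ = Phi S w := by
  apply uniqA (S := S)
  · -- DecOn (Phi S w)⁻¹
    intro p q hpq h
    rw [inv_symm_apply, inv_symm_apply]
    exact Phi_symm_rev w p q hpq h
  · -- symm of (Phi S w)⁻¹ is Phi S w
    intro v v' hvv h
    have : ((Phi S w)⁻¹).symm = Phi S w := by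
      rw [← Equiv.Perm.inv_def, inv_inv]
    rw [this]
    exact Phi_dec hw v v' hvv h
  · exact Phi_dec hw
  · exact Phi_symm_rev w
  · intro i j
    rw [M_inv, M_Phi, M_Phi, ← M_inv, hinv]

lemma Psi_Phi {S : Finset ℕ} {w : Equiv.Perm (Fin n)} (hinv : w⁻¹ = w)
    (hw : IncOn S w) : Psi S (Phi S w) = w := by
  apply uniqD (S := S)
  · exact Psi_inc (Phi_dec hw)
  · exact Psi_symm_mono (Phi S w)
  · exact hw
  · exact symm_inc_of_inv hinv hw
  · intro i j
    rw [M_Psi, M_Phi]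

lemma Phi_Psi {S : Finset ℕ} {w : Equiv.Perm (Fin n)} (hinv : w⁻¹ = w)
    (hw : DecOn S w) : Phi S (Psi S w) = w := by
  apply uniqA (S := S)
  · exact Phi_dec (Psi_inc hw)
  · exact Phi_symm_rev (Psi S w)
  · exact hw
  · exact symm_dec_of_inv hinv hw
  · intro i j
    rw [M_Phi, M_Psi]

lemma Psi_involutive {S : Finset ℕ} {w : Equiv.Perm (Fin n)} (hinv : w⁻¹ = w)
    (hw : DecOn S w) : (Psi S w)⁻¹ = Psi S w := by
  apply uniqD (S := S)
  · intro p q hpq h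
    rw [inv_symm_apply, inv_symm_apply]
    exact Psi_symm_mono w p q hpq h
  · intro v v' hvv h
    have : ((Psi S w)⁻¹).symm = Psi S w := by
      rw [← Equiv.Perm.inv_def, inv_inv]
    rw [this]
    exact Psi_inc hw v v' hvv h
  · exact Psi_inc hw
  · exact Psi_symm_mono w
  · intro i j
    rw [M_inv, M_Psi, M_Psi, ← M_inv, hinv]

open Classical in
lemma core_card (S : Finset ℕ) (n : ℕ) :
    ((univ : Finset (Equiv.Perm (Fin n))).filter fun w => w * w = 1 ∧ IncOn S w).card
      = ((univ : Finset (Equiv.Perm (Fin n))).filter fun w => w * w = 1 ∧ DecOn S w).card := by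
  apply Finset.card_bij' (fun w _ => Phi S w) (fun w _ => Psi S w)
  · intro w hw
    simp only [mem_filter, mem_univ, true_and] at hw ⊢
    have hinv : w⁻¹ = w := mul_eq_one_iff_inv_eq.mp hw.1
    exact ⟨mul_eq_one_iff_inv_eq.mpr (Phi_involutive hinv hw.2), Phi_dec hw.2⟩
  · intro w hw
    simp only [mem_filter, mem_univ, true_and] at hw ⊢
    have hinv : w⁻¹ = w := mul_eq_one_iff_inv_eq.mp hw.1
    exact ⟨mul_eq_one_iff_inv_eq.mpr (Psi_involutive hinv hw.2), Psi_inc hw.2⟩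
  · intro w hw
    simp only [mem_filter, mem_univ, true_and] at hw
    exact Psi_Phi (mul_eq_one_iff_inv_eq.mp hw.1) hw.2
  · intro w hw
    simp only [mem_filter, mem_univ, true_and] at hw
    exact Phi_Psi (mul_eq_one_iff_inv_eq.mp hw.1) hw.2

def DesSet {n : ℕ} (w : Equiv.Perm (Fin n)) : Finset ℕ :=
  (Finset.range (n - 1)).filter fun i => permVal w (i + 1) < permVal w i

def AscSet {n : ℕ} (w : Equiv.Perm (Fin n)) : Finset ℕ :=
  (Finset.range (n - 1)).filter fun i => permVal w i < permVal w (i + 1)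

lemma des_eq_card_desSet {n : ℕ} (w : Equiv.Perm (Fin n)) : des w = (DesSet w).card := rfl

lemma permVal_eq {n : ℕ} (w : Equiv.Perm (Fin n)) {i : ℕ} (h : i < n) :
    permVal w i = (w ⟨i, h⟩).val := dif_pos h

lemma permVal_ne {n : ℕ} (w : Equiv.Perm (Fin n)) {i : ℕ} (h : i + 1 < n) :
    permVal w i ≠ permVal w (i+1) := by
  rw [permVal_eq w (by omega), permVal_eq w h]
  intro hc
  have := w.injective (Fin.ext hc : w ⟨i, by omega⟩ = w ⟨i+1, h⟩)
  simp only [Fin.mk.injEq] at this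
  omega

lemma permVal_chain {n : ℕ} (w : Equiv.Perm (Fin n)) (a b : ℕ) (hab : a < b)
    (h : ∀ i, a ≤ i → i < b → permVal w i < permVal w (i+1)) :
    permVal w a < permVal w b := by
  induction b with
  | zero => omega
  | succ m ih =>
    rcases Nat.lt_or_ge a m with h' | h'
    · exact lt_trans (ih h' (fun i hi hib => h i hi (by omega))) (h m (by omega) (by omega))
    · have : a = m := by omega
      subst this
      exact h a le_rfl (by omega)

lemma desSet_subset_iff {n : ℕ} (S : Finset ℕ) (w : Equiv.Perm (Fin n)) :
    DesSet w ⊆ S ↔ IncOn S w := by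
  constructor
  · intro hsub p q hpq h
    rw [Fin.lt_def]
    have hkey : (w p).val = permVal w p.val ∧ (w q).val = permVal w q.val := by
      constructor <;> rw [permVal_eq w (by omega)]
    rw [hkey.1, hkey.2]
    apply permVal_chain w p.val q.val hpq
    intro i hpi hiq
    have hik : i + 1 < n := by have := q.isLt; omega
    have hblk : blk S i = blk S (i+1) := by
      have h1 : blk S p.val ≤ blk S i := blk_mono S hpi
      have h2 : blk S (i+1) ≤ blk S q.val := blk_mono S (by omega)
      have h3 : blk S i ≤ blk S (i+1) := blk_mono S (by omega)
      have h4 : blk S p.val = blk S q.val := h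
      omega
    have hiS : i ∉ S := by
      intro hmem
      have := blk_lt_succ_of_mem (S := S) hmem
      omega
    have hnotdes : i ∉ DesSet w := fun hmem => hiS (hsub hmem)
    have hne := permVal_ne w hik
    rw [DesSet, Finset.mem_filter] at hnotdes
    push_neg at hnotdes
    have hrange : i ∈ Finset.range (n-1) := Finset.mem_range.mpr (by omega)
    have := hnotdes hrange
    omega
  · intro hinc i hi
    rw [DesSet, Finset.mem_filter, Finset.mem_range] at hi
    by_contra hiS
    have hblk : blk S (i+1) = blk S i := blk_succ_of_not_mem hiS
    have h1 : i < n := by omega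
    have h2 : i + 1 < n := by omega
    have := hinc ⟨i, h1⟩ ⟨i+1, h2⟩ (Fin.mk_lt_mk.mpr (by omega)) (by rw [bf_def, bf_def]; exact hblk.symm)
    rw [Fin.lt_def] at this
    rw [permVal_eq w h2, permVal_eq w h1] at hi
    omega

lemma ascSet_subset_iff {n : ℕ} (S : Finset ℕ) (w : Equiv.Perm (Fin n)) :
    AscSet w ⊆ S ↔ DecOn S w := by
  constructor
  · intro hsub p q hpq h
    rw [Fin.lt_def]
    have hkey : (w p).val = permVal w p.val ∧ (w q).val = permVal w q.val := by
      constructor <;> rw [permVal_eq w (by omega)]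
    rw [hkey.1, hkey.2]
    have : ∀ i, p.val ≤ i → i < q.val → permVal w (i+1) < permVal w i := by
      intro i hpi hiq
      have hik : i + 1 < n := by have := q.isLt; omega
      have hblk : blk S i = blk S (i+1) := by
        have h1 : blk S p.val ≤ blk S i := blk_mono S hpi
        have h2 : blk S (i+1) ≤ blk S q.val := blk_mono S (by omega)
        have h3 : blk S i ≤ blk S (i+1) := blk_mono S (by omega)
        have h4 : blk S p.val = blk S q.val := h
        omega
      have hiS : i ∉ S := by
        intro hmem
        have := blk_lt_succ_of_mem (S := S) hmem
        omega
      have hnotasc : i ∉ AscSet w := fun hmem => hiS (hsub hmem)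
      have hne := permVal_ne w hik
      rw [AscSet, Finset.mem_filter] at hnotasc
      push_neg at hnotasc
      have hrange : i ∈ Finset.range (n-1) := Finset.mem_range.mpr (by omega)
      have := hnotasc hrange
      omega
    -- decreasing chain
    have hchain : ∀ b, p.val < b → b ≤ q.val → permVal w b < permVal w p.val := by
      intro b
      induction b with
      | zero => omega
      | succ m ih =>
        intro h1 h2
        rcases Nat.lt_or_ge p.val m with h' | h'
        · exact lt_trans (this m (by omega) (by omega)) (ih h' (by omega))
        · have hpm : p.val = m := by omega
          rw [← hpm]
          exact this p.val le_rfl (by omega)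
    exact hchain q.val hpq le_rfl
  · intro hdec i hi
    rw [AscSet, Finset.mem_filter, Finset.mem_range] at hi
    by_contra hiS
    have hblk : blk S (i+1) = blk S i := blk_succ_of_not_mem hiS
    have h1 : i < n := by omega
    have h2 : i + 1 < n := by omega
    have := hdec ⟨i, h1⟩ ⟨i+1, h2⟩ (Fin.mk_lt_mk.mpr (by omega)) (by rw [bf_def, bf_def]; exact hblk.symm)
    rw [Fin.lt_def] at this
    rw [permVal_eq w h1, permVal_eq w h2] at hi
    omega

noncomputable def Inv (n : ℕ) : Finset (Equiv.Perm (Fin n)) :=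
  univ.filter fun w => w * w = 1

open Classical in
noncomputable def cD (n : ℕ) (D : Finset ℕ) : ℕ :=
  ((Inv n).filter fun w => DesSet w = D).card

open Classical in
lemma count_des_subset_eq (S : Finset ℕ) :
    ((Inv n).filter fun w => DesSet w ⊆ S).card
      = ((Inv n).filter fun w => AscSet w ⊆ S).card := by
  rw [Inv, Finset.filter_filter, Finset.filter_filter]
  have h1 : ((univ : Finset (Equiv.Perm (Fin n))).filter fun w => w * w = 1 ∧ DesSet w ⊆ S)
      = (univ : Finset (Equiv.Perm (Fin n))).filter fun w => w * w = 1 ∧ IncOn S w := by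
    apply Finset.filter_congr
    intro w _
    exact and_congr_right fun _ => desSet_subset_iff S w
  have h2 : ((univ : Finset (Equiv.Perm (Fin n))).filter fun w => w * w = 1 ∧ AscSet w ⊆ S)
      = (univ : Finset (Equiv.Perm (Fin n))).filter fun w => w * w = 1 ∧ DecOn S w := by
    apply Finset.filter_congr
    intro w _
    exact and_congr_right fun _ => ascSet_subset_iff S w
  rw [h1, h2]
  exact core_card S n

lemma desSet_subset_range (w : Equiv.Perm (Fin n)) : DesSet w ⊆ Finset.range (n-1) :=
  Finset.filter_subset _ _

lemma ascSet_eq_compl (w : Equiv.Perm (Fin n)) :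
    AscSet w = Finset.range (n-1) \ DesSet w := by
  ext i
  simp only [AscSet, DesSet, Finset.mem_filter, Finset.mem_sdiff, Finset.mem_range]
  constructor
  · rintro ⟨h1, h2⟩
    refine ⟨h1, ?_⟩
    rintro ⟨_, h3⟩
    omega
  · rintro ⟨h1, h2⟩
    refine ⟨h1, ?_⟩
    have hne := permVal_ne w (show i + 1 < n by omega)
    have h3 : ¬ (permVal w (i+1) < permVal w i) := fun hc => h2 ⟨h1, hc⟩
    omega

open Classical in
lemma card_asc_eq {E : Finset ℕ} (hE : E ⊆ Finset.range (n-1)) :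
    ((Inv n).filter fun w => AscSet w = E).card = cD n (Finset.range (n-1) \ E) := by
  rw [cD]
  congr 1
  apply Finset.filter_congr
  intro w _
  constructor
  · intro h
    rw [← h, ascSet_eq_compl, Finset.sdiff_sdiff_eq_self (desSet_subset_range w)]
  · intro h
    rw [ascSet_eq_compl, h, Finset.sdiff_sdiff_eq_self hE]

open Classical in
lemma sum_cD_des (S : Finset ℕ) :
    ∑ E ∈ S.powerset, cD n E = ((Inv n).filter fun w => DesSet w ⊆ S).card := by
  rw [Finset.card_eq_sum_card_fiberwise
    (f := DesSet) (t := S.powerset)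
    (fun w hw => Finset.mem_powerset.mpr (Finset.mem_filter.mp hw).2)]
  apply Finset.sum_congr rfl
  intro E hE
  rw [cD]
  congr 1
  rw [Finset.filter_filter]
  apply Finset.filter_congr
  intro w _
  constructor
  · intro h
    exact ⟨by rw [h]; exact Finset.mem_powerset.mp hE, h⟩
  · rintro ⟨_, h⟩; exact h

open Classical in
lemma sum_cD_asc (S : Finset ℕ) (hS : S ⊆ Finset.range (n-1)) :
    ∑ E ∈ S.powerset, cD n (Finset.range (n-1) \ E)
      = ((Inv n).filter fun w => AscSet w ⊆ S).card := by
  rw [Finset.card_eq_sum_card_fiberwise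
    (f := AscSet) (t := S.powerset)
    (fun w hw => Finset.mem_powerset.mpr (Finset.mem_filter.mp hw).2)]
  apply Finset.sum_congr rfl
  intro E hE
  have hE' : E ⊆ Finset.range (n-1) := (Finset.mem_powerset.mp hE).trans hS
  rw [← card_asc_eq hE']
  congr 1
  rw [Finset.filter_filter]
  apply Finset.filter_congr
  intro w _
  constructor
  · intro h
    exact ⟨by rw [h]; exact Finset.mem_powerset.mp hE, h⟩
  · rintro ⟨_, h⟩; exact h

open Classical in
lemma cD_compl : ∀ (k : ℕ) (D : Finset ℕ), D.card = k → D ⊆ Finset.range (n-1) →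
    cD n D = cD n (Finset.range (n-1) \ D) := by
  intro k
  induction k using Nat.strong_induction_on with
  | _ k ih =>
    intro D hcard hD
    have hkey : ∑ E ∈ D.powerset, cD n E = ∑ E ∈ D.powerset, cD n (Finset.range (n-1) \ E) := by
      rw [sum_cD_des D, sum_cD_asc D hD, count_des_subset_eq]
    have hpow : D.powerset = insert D (D.powerset.erase D) :=
      (Finset.insert_erase (Finset.mem_powerset_self D)).symm
    rw [hpow, Finset.sum_insert (Finset.notMem_erase _ _),
      Finset.sum_insert (Finset.notMem_erase _ _)] at hkey
    have hterm : ∑ E ∈ D.powerset.erase D, cD n E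
        = ∑ E ∈ D.powerset.erase D, cD n (Finset.range (n-1) \ E) := by
      apply Finset.sum_congr rfl
      intro E hE
      have h1 : E ⊆ D := Finset.mem_powerset.mp (Finset.mem_of_mem_erase hE)
      have h2 : E ≠ D := Finset.ne_of_mem_erase hE
      have h3 : E.card < k := by
        rw [← hcard]
        exact Finset.card_lt_card (Finset.ssubset_iff_subset_ne.mpr ⟨h1, h2⟩)
      exact ih E.card h3 E rfl (h1.trans hD)
    omega

open Classical in
lemma card_des_eq_sum (i : ℕ) :
    ((Inv n).filter fun w => des w = i).card
      = ∑ D ∈ (Finset.range (n-1)).powerset.filter (fun D => D.card = i), cD n D := by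
  rw [Finset.card_eq_sum_card_fiberwise
    (f := DesSet) (t := (Finset.range (n-1)).powerset.filter (fun D => D.card = i))
    (fun w hw => by
      simp only [Finset.mem_coe, Finset.mem_filter, Finset.mem_powerset]
      refine ⟨desSet_subset_range w, ?_⟩
      have := (Finset.mem_filter.mp hw).2
      rw [← des_eq_card_desSet]
      exact this)]
  apply Finset.sum_congr rfl
  intro D hD
  rw [cD]
  congr 1
  rw [Finset.filter_filter]
  apply Finset.filter_congr
  intro w _
  constructor
  · rintro ⟨_, h⟩; exact h
  · intro h
    refine ⟨?_, h⟩
    rw [des_eq_card_desSet, h]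
    exact (Finset.mem_filter.mp hD).2

open Classical in
lemma a_symm (i : ℕ) (hi : i ≤ n - 1) :
    ((Inv n).filter fun w => des w = i).card
      = ((Inv n).filter fun w => des w = (n - 1 - i)).card := by
  rw [card_des_eq_sum, card_des_eq_sum]
  apply Finset.sum_nbij' (i := fun D => Finset.range (n-1) \ D)
    (j := fun D => Finset.range (n-1) \ D)
  · intro D hD
    simp only [Finset.mem_filter, Finset.mem_powerset] at hD ⊢
    refine ⟨Finset.sdiff_subset, ?_⟩
    rw [Finset.card_sdiff_of_subset hD.1, Finset.card_range, hD.2]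
  · intro D hD
    simp only [Finset.mem_filter, Finset.mem_powerset] at hD ⊢
    refine ⟨Finset.sdiff_subset, ?_⟩
    rw [Finset.card_sdiff_of_subset hD.1, Finset.card_range, hD.2]
    omega
  · intro D hD
    simp only [Finset.mem_filter, Finset.mem_powerset] at hD
    exact Finset.sdiff_sdiff_eq_self hD.1
  · intro D hD
    simp only [Finset.mem_filter, Finset.mem_powerset] at hD
    exact Finset.sdiff_sdiff_eq_self hD.1
  · intro D hD
    simp only [Finset.mem_filter, Finset.mem_powerset] at hD
    exact cD_compl D.card D rfl hD.1

open Classical in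
lemma coeff_eq (n : ℕ) (i : ℕ) :
    (involutionEulerian n).coeff i = (((Inv n).filter fun w => des w = i).card : ℝ) := by
  rw [involutionEulerian, Polynomial.finset_sum_coeff]
  have h0 : (Finset.univ.filter fun w : Equiv.Perm (Fin n) => w * w = 1) = Inv n := rfl
  rw [h0]
  trans (∑ w ∈ Inv n, if des w = i then (1:ℝ) else 0)
  · exact Finset.sum_congr rfl fun w _ => by
      rw [Polynomial.coeff_X_pow]
      simp [eq_comm]
  · rw [Finset.sum_boole]

lemma des_le (n : ℕ) (w : Equiv.Perm (Fin n)) : des w ≤ n - 1 := by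
  rw [des]
  calc _ ≤ (Finset.range (n-1)).card := Finset.card_filter_le _ _
    _ = n - 1 := Finset.card_range _

end Strehl
/-- Strehl: `I_n(x)` is symmetric with center `(n-1)/2`. -/
theorem involutionEulerian_symmetric (n : ℕ) (hn : 1 ≤ n) :
    (∀ i ≤ n - 1,
      (involutionEulerian n).coeff i = (involutionEulerian n).coeff (n - 1 - i)) ∧
    (∀ i, n - 1 < i → (involutionEulerian n).coeff i = 0) := by
  constructor
  · intro i hi
    rw [Strehl.coeff_eq n i, Strehl.coeff_eq n (n - 1 - i)]
    exact_mod_cast congrArg (Nat.cast : ℕ → ℝ) (Strehl.a_symm (n := n) i hi)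
  · intro i hi
    rw [Strehl.coeff_eq n i]
    have hempty : ((Strehl.Inv n).filter fun w => des w = i) = ∅ := by
      apply Finset.filter_eq_empty_iff.mpr
      intro w _
      have := Strehl.des_le n w
      omega
    rw [hempty]
    simp
end
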